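/- Correctness of pushing an aggregation into a fixpoint (rule PA, step): let φ be a bag homomorphism and δ an aggregation function compatible with φ (δ ∘ φ ∘ δ = δ ∘ φ). For a multiset R define S_0 = R, S_{n+1} = R + φ(S_n) and S'_0 = δ(R), S'_{n+1} = δ(R + φ(S'_n)). Then for every n, δ(S_n) = S'_n. -/
import Mathlib


/-- The plain fixpoint sequence: `S 0 = R`, `S (n+1) = R + φ (S n)`. -/
def plainSeq {τ : Type*} (φ : Multiset τ → Multiset τ) (R : Multiset τ) :
    ℕ → Multiset τ
  | 0 => R
  | n + 1 => R + φ (plainSeq φ R n)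

/-- The aggregated fixpoint sequence:
`S' 0 = δ R`, `S' (n+1) = δ (R + φ (S' n))`. -/
def aggSeq {τ : Type*} (δ φ : Multiset τ → Multiset τ) (R : Multiset τ) :
    ℕ → Multiset τ
  | 0 => δ R
  | n + 1 => δ (R + φ (aggSeq δ φ R n))

/-- Correctness of pushing an aggregation into a fixpoint (rule PA, step):
`δ (S n) = S' n` for every `n`. -/
theorem push_aggregation_step {τ : Type*}
    (φ δ : Multiset τ → Multiset τ)
    (hφ0 : φ 0 = 0) (hφadd : ∀ a b : Multiset τ, φ (a + b) = φ a + φ b)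
    (hδ0 : δ 0 = 0) (hagg : ∀ a b : Multiset τ, δ (a + b) = δ (δ a + δ b))
    (hcompat : δ ∘ φ ∘ δ = δ ∘ φ)
    (R : Multiset τ) :
    ∀ n, δ (plainSeq φ R n) = aggSeq δ φ R n := by
  have hc : ∀ x : Multiset τ, δ (φ (δ x)) = δ (φ x) := fun x => congrFun hcompat x
  intro n
  induction n with
  | zero => rfl
  | succ n ih =>
    show δ (R + φ (plainSeq φ R n)) = δ (R + φ (aggSeq δ φ R n))
    rw [hagg, ← ih, ← hc, ← hagg]
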